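/- arXiv:1608.03116 — 2 statements merged into one kernel-verified Lean document; each statement's English description precedes it below -/
import Mathlib

section
/- For every positive integer n, there exists a semilattice indecomposable semigroup S with |S| = n containing a subsemilattice Y with |Y| = 2⌊(n − 1)/4⌋ + 1. -/
/-!
In `Y' ×₀ B₂` every element either squares to zero or is a product `(y, e_ij) (y, e_ji)` with
`i ≠ j` of two elements that square to zero. A homomorphism `f` into a band satisfies
`f u = f (u * u)`, so it sends every square-zero element, and hence every element, to `f 0`.
When `Y'` is a `k`-element chain with a zero adjoined, `Y' ×₀ B₂` has `4k + 1` elements and its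
diagonal `{0} ∪ {(y, e_ii)}` is a subsemilattice with `2k + 1` elements; adjoining `r ≤ 3` null
elements reaches every size `n = 4k + 1 + r`.
-/

/-- A semigroup is semilattice indecomposable if every semigroup homomorphism from it to a
semilattice (a commutative idempotent semigroup) is constant. -/
def SemilatticeIndecomposable (S : Type) [Semigroup S] : Prop :=
  ∀ (T : Type) [Semigroup T],
    (∀ a b : T, a * b = b * a) → (∀ a : T, a * a = a) →
      ∀ f : S →ₙ* T, ∀ x y : S, f x = f y

/-- A subsemilattice of a semigroup: a subsemigroup consisting of pairwise commuting
idempotents. -/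
def IsSubsemilattice {S : Type} [Mul S] (Y : Set S) : Prop :=
  (∀ a ∈ Y, ∀ b ∈ Y, a * b ∈ Y) ∧ (∀ a ∈ Y, a * a = a) ∧
    (∀ a ∈ Y, ∀ b ∈ Y, a * b = b * a)

theorem SemilatticeIndecomposable.of_forall_mul_self_eq_zero_or {S : Type} [SemigroupWithZero S]
    (h : ∀ x : S, x * x = 0 ∨ ∃ u v : S, u * u = 0 ∧ v * v = 0 ∧ u * v = x) :
    SemilatticeIndecomposable S := by
  intro T _ _ hidem f x y
  have map_of_sq_zero {u : S} (hu : u * u = 0) : f u = f 0 := by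
    rw [← hidem (f u), ← map_mul, hu]
  have map_eq_zero (x : S) : f x = f 0 := by
    obtain hx | ⟨u, v, hu, hv, rfl⟩ := h x
    · exact map_of_sq_zero hx
    · rw [map_mul, map_of_sq_zero hu, map_of_sq_zero hv, hidem]
  rw [map_eq_zero x, map_eq_zero y]

/-- `none` is the zero, `some (inl (y, i, j))` is `(y, e_ij)` and the `some (inr z)` are null
elements. -/
abbrev ReesBrandt (α ι N : Type) : Type := Option (α × ι × ι ⊕ N)

namespace ReesBrandt

variable {α ι N : Type}

theorem card_eq [Fintype α] [Fintype ι] [Fintype N] :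
    Fintype.card (ReesBrandt α ι N) =
      Fintype.card α * Fintype.card ι * Fintype.card ι + Fintype.card N + 1 := by
  simp [mul_assoc]

instance : Zero (ReesBrandt α ι N) := ⟨none⟩

def cell (y : α) (i j : ι) : ReesBrandt α ι N := some (.inl (y, i, j))

def diagonal : Set (ReesBrandt α ι N) := insert 0 (Set.range fun p : α × ι ↦ cell p.1 p.2 p.2)

theorem mem_diagonal {x : ReesBrandt α ι N} : x ∈ diagonal ↔ x = 0 ∨ ∃ y i, cell y i i = x := by
  simp [diagonal]

theorem ncard_diagonal [Finite α] [Finite ι] :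
    (diagonal : Set (ReesBrandt α ι N)).ncard = Nat.card α * Nat.card ι + 1 := by
  have cell_injective : (fun p : α × ι ↦ (cell p.1 p.2 p.2 : ReesBrandt α ι N)).Injective := by
    rintro ⟨y, i⟩ ⟨y', i'⟩ h
    simp only [cell, Option.some.injEq, Sum.inl.injEq, Prod.mk.injEq] at h
    rw [h.1, h.2.1]
  have zero_notMem : (0 : ReesBrandt α ι N) ∉ Set.range fun p : α × ι ↦ cell p.1 p.2 p.2 := by
    rintro ⟨_, h⟩
    cases h
  rw [diagonal, Set.ncard_insert_of_notMem zero_notMem, Set.ncard_range_of_injective cell_injective,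
    Nat.card_prod]

variable [SemilatticeInf α] [DecidableEq ι]

protected def mul : ReesBrandt α ι N → ReesBrandt α ι N → ReesBrandt α ι N
  | some (.inl (y, i, j)), some (.inl (y', i', j')) =>
      if j = i' then some (.inl (y ⊓ y', i, j')) else none
  | _, _ => none

private theorem mul_none_left (a : ReesBrandt α ι N) : ReesBrandt.mul none a = none := rfl

private theorem mul_none_right (a : ReesBrandt α ι N) : ReesBrandt.mul a none = none := by
  rcases a with _ | (_ | _) <;> rfl

private theorem mul_inr_right (a : ReesBrandt α ι N) (z : N) :
    ReesBrandt.mul a (some (.inr z)) = none := by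
  rcases a with _ | (_ | _) <;> rfl

private theorem mul_inl_inl (y y' : α) (i j i' j' : ι) :
    (ReesBrandt.mul (some (.inl (y, i, j))) (some (.inl (y', i', j'))) : ReesBrandt α ι N) =
      if j = i' then some (.inl (y ⊓ y', i, j')) else none :=
  rfl

instance : Mul (ReesBrandt α ι N) := ⟨ReesBrandt.mul⟩

instance : SemigroupWithZero (ReesBrandt α ι N) where
  zero_mul _ := rfl
  mul_zero := mul_none_right
  mul_assoc a b c := by
    change ReesBrandt.mul (ReesBrandt.mul a b) c = ReesBrandt.mul a (ReesBrandt.mul b c)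
    rcases a with _ | (⟨y, i, j⟩ | _) <;> rcases b with _ | (⟨y', i', j'⟩ | _) <;>
      rcases c with _ | (⟨y'', i'', j''⟩ | _) <;> try rfl
    all_goals
      simp only [mul_inl_inl, mul_none_right, mul_inr_right]
      try split_ifs <;> simp_all [mul_none_left, mul_none_right, mul_inl_inl, inf_assoc]

theorem cell_mul_cell (y y' : α) (i j i' j' : ι) :
    (cell y i j * cell y' i' j' : ReesBrandt α ι N) =
      if j = i' then cell (y ⊓ y') i j' else 0 :=
  rfl

theorem cell_mul_self_of_ne {y : α} {i j : ι} (h : i ≠ j) :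
    (cell y i j * cell y i j : ReesBrandt α ι N) = 0 := by
  rw [cell_mul_cell, if_neg h.symm]

theorem mul_self_eq_zero_or [Nontrivial ι] (x : ReesBrandt α ι N) :
    x * x = 0 ∨ ∃ u v : ReesBrandt α ι N, u * u = 0 ∧ v * v = 0 ∧ u * v = x := by
  rcases x with _ | (⟨y, i, j⟩ | _)
  · exact .inl rfl
  · change cell y i j * cell y i j = 0 ∨ ∃ u v, u * u = 0 ∧ v * v = 0 ∧ u * v = cell y i j
    rcases eq_or_ne i j with rfl | hij
    · obtain ⟨j, hj⟩ := exists_ne i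
      refine .inr ⟨cell y i j, cell y j i, cell_mul_self_of_ne hj.symm,
        cell_mul_self_of_ne hj, ?_⟩
      rw [cell_mul_cell, if_pos rfl, inf_idem]
    · exact .inl (cell_mul_self_of_ne hij)
  · exact .inl rfl

theorem semilatticeIndecomposable [Nontrivial ι] :
    SemilatticeIndecomposable (ReesBrandt α ι N) :=
  .of_forall_mul_self_eq_zero_or mul_self_eq_zero_or

theorem isSubsemilattice_diagonal : IsSubsemilattice (diagonal : Set (ReesBrandt α ι N)) := by
  refine ⟨?_, ?_, ?_⟩
  · rintro a ha b hb
    rcases mem_diagonal.1 ha with rfl | ⟨y, i, rfl⟩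
    · simp [mem_diagonal]
    rcases mem_diagonal.1 hb with rfl | ⟨y', i', rfl⟩
    · simp [mem_diagonal]
    rw [cell_mul_cell]
    split_ifs with h
    · exact mem_diagonal.2 (.inr ⟨_, _, by rw [h]⟩)
    · exact mem_diagonal.2 (.inl rfl)
  · rintro a ha
    rcases mem_diagonal.1 ha with rfl | ⟨y, i, rfl⟩
    · exact zero_mul 0
    · rw [cell_mul_cell, if_pos rfl, inf_idem]
  · rintro a ha b hb
    rcases mem_diagonal.1 ha with rfl | ⟨y, i, rfl⟩
    · simp
    rcases mem_diagonal.1 hb with rfl | ⟨y', i', rfl⟩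
    · simp
    rw [cell_mul_cell, cell_mul_cell, inf_comm]
    rcases eq_or_ne i i' with rfl | h
    · rfl
    · rw [if_neg h, if_neg h.symm]

end ReesBrandt

/-- For every positive integer `n` there is a semilattice indecomposable semigroup of
cardinality `n` containing a subsemilattice of cardinality `2⌊(n-1)/4⌋ + 1`. -/
theorem stmt_12 (n : ℕ) (hn : 0 < n) :
    ∃ (S : Type) (instS : Semigroup S) (_ : Fintype S),
      Fintype.card S = n ∧ @SemilatticeIndecomposable S instS ∧
        ∃ Y : Set S, @IsSubsemilattice S instS.toMul Y ∧
          Y.ncard = 2 * ((n - 1) / 4) + 1 := by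
  set k := (n - 1) / 4
  set r := (n - 1) % 4
  refine ⟨ReesBrandt (Fin k) (Fin 2) (Fin r), inferInstance, inferInstance, ?_,
    ReesBrandt.semilatticeIndecomposable, ReesBrandt.diagonal,
    ReesBrandt.isSubsemilattice_diagonal, ?_⟩
  · rw [ReesBrandt.card_eq]
    simp only [Fintype.card_fin]
    omega
  · rw [ReesBrandt.ncard_diagonal, Nat.card_fin, Nat.card_fin, mul_comm]
end

section
/- Every finite semigroup S can be embedded into a semilattice indecomposable semigroup with exactly 4|S| + 1 elements. -/
/-- `S⁰ ×₀ B_ι`: the nonzero elements are the triples `(s, i, j)`, where `(i, j)` is a matrix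
unit of the Brandt semigroup `B_ι`. -/
def Brandt (S ι : Type) : Type := Option (S × ι × ι)

namespace Brandt

variable {S ι : Type}

instance : Zero (Brandt S ι) := ⟨none⟩

def of (s : S) (i j : ι) : Brandt S ι := some (s, i, j)

instance [Fintype S] [Fintype ι] : Fintype (Brandt S ι) :=
  inferInstanceAs (Fintype (Option (S × ι × ι)))

theorem card [Fintype S] [Fintype ι] :
    Fintype.card (Brandt S ι) = Fintype.card S * Fintype.card ι ^ 2 + 1 := by
  rw [show Fintype.card (Brandt S ι) = Fintype.card (Option (S × ι × ι)) from rfl,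
    Fintype.card_option, Fintype.card_prod, Fintype.card_prod, sq]

variable [Semigroup S] [DecidableEq ι]

instance : Mul (Brandt S ι) where
  mul
    | some (s, i, j), some (t, k, l) => if j = k then of (s * t) i l else 0
    | _, _ => 0

@[simp] theorem zero_mul (x : Brandt S ι) : 0 * x = 0 := rfl

@[simp] theorem mul_zero (x : Brandt S ι) : x * 0 = 0 := by
  rcases x with _ | ⟨s, i, j⟩ <;> rfl

theorem of_mul_of (s t : S) (i j k l : ι) :
    of s i j * of t k l = if j = k then of (s * t) i l else 0 := rfl

instance : Semigroup (Brandt S ι) where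
  mul_assoc := by
    rintro (_ | ⟨s, i, j⟩) (_ | ⟨t, k, l⟩) (_ | ⟨u, m, n⟩)
    all_goals try rfl
    · exact (mul_zero _).trans (mul_zero _).symm
    · show of s i j * of t k l * of u m n = of s i j * (of t k l * of u m n)
      simp only [of_mul_of]
      split_ifs <;> simp [of_mul_of, mul_assoc, *]

def ofDiag (i : ι) : S →ₙ* Brandt S ι where
  toFun s := of s i i
  map_mul' s t := by simp [of_mul_of]

theorem ofDiag_injective (i : ι) : Function.Injective (ofDiag (S := S) i) := by
  intro s t h
  exact congrArg Prod.fst (Option.some_injective _ h)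

theorem map_eq_map_zero [Nontrivial ι] {T : Type} [Mul T] (hidem : ∀ a : T, a * a = a)
    (g : Brandt S ι →ₙ* T) (x : Brandt S ι) : g x = g 0 := by
  have map_self : ∀ y, g (y * y) = g y := fun y => by rw [map_mul, hidem]
  have off_diag : ∀ (s : S) {i j : ι}, i ≠ j → g (of s i j) = g 0 := fun s i j hij => by
    rw [← map_self, of_mul_of, if_neg hij.symm]
  rcases x with _ | ⟨s, i, k⟩
  · rfl
  by_cases hik : i = k
  · subst hik
    obtain ⟨j, hji⟩ := exists_ne i
    calc g (of s i i) = g (of s i j * of s j i) := by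
          rw [← map_self, of_mul_of, of_mul_of, if_pos rfl, if_pos rfl]
      _ = g 0 := by rw [map_mul, off_diag s hji.symm, off_diag s hji, hidem]
  · exact off_diag s hik

theorem semilatticeIndecomposable [Nontrivial ι] : SemilatticeIndecomposable (Brandt S ι) :=
  fun _ _ _ hidem g x y => (map_eq_map_zero hidem g x).trans (map_eq_map_zero hidem g y).symm

end Brandt

/-- Every finite semigroup `S` can be embedded into a semilattice indecomposable semigroup
with exactly `4|S| + 1` elements. -/
theorem stmt_14 (S : Type) [Semigroup S] [Fintype S] :
    ∃ (T : Type) (instT : Semigroup T) (_ : Fintype T),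
      Fintype.card T = 4 * Fintype.card S + 1 ∧
      @SemilatticeIndecomposable T instT ∧
      ∃ f : S → T, Function.Injective f ∧
        ∀ x y : S, f (x * y) = @HMul.hMul T T T (@instHMul T instT.toMul) (f x) (f y) := by
  refine ⟨Brandt S (Fin 2), inferInstance, inferInstance, ?_, Brandt.semilatticeIndecomposable,
    Brandt.ofDiag 0, Brandt.ofDiag_injective 0, map_mul _⟩
  rw [Brandt.card, Fintype.card_fin]
  ring
end
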